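/- In the 3-player game with A_1 = {T,B}, A_2 = {L,R}, A_3 = {E} and payoffs u(T,L) = (1,1,0), u(T,R) = (0,0,1), u(B,L) = (0,0,−1), u(B,R) = (1,1,0), there exist no-regret strategies σ_1, σ_2 for the learners (the regret-matching strategies with specified tie-breaking) such that play follows the period-3 cycle (T,L), (B,R), (B,L), (T,L), (B,R), (B,L), … and consequently the optimizer's long-run average utility equals (0 + 1 + (−1))/3 = −1/3 < 0 = v_mixed. -/

import Mathlib

open MeasureTheory Filter Finset

noncomputable section

/-- Learners' coordination utility in the game of Counterexample 2:
payoff 1 on (T,L) and (B,R), else 0. `T`,`L` are `true`; `B`,`R` are `false`. -/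
def uL (a b : Bool) : ℝ := if a = b then 1 else 0

/-- Optimizer's utility: `u3(T,L)=0, u3(T,R)=1, u3(B,L)=-1, u3(B,R)=0`. -/
def u3 (p : Bool × Bool) : ℝ :=
  if p = (true, false) then 1 else if p = (false, true) then -1 else 0

/-- `r̄ᵗ_{T,B}` of player 1 from a history of length `t`. -/
def rTB {t : ℕ} (h : Fin t → Bool × Bool) : ℝ :=
  (∑ m, if (h m).1 = true then (if (h m).2 = false then (1 : ℝ) else -1) else 0) / t

/-- `r̄ᵗ_{B,T}` of player 1. -/
def rBT {t : ℕ} (h : Fin t → Bool × Bool) : ℝ :=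
  (∑ m, if (h m).1 = false then (if (h m).2 = true then (1 : ℝ) else -1) else 0) / t

/-- `r̄ᵗ_{L,R}` of player 2. -/
def rLR {t : ℕ} (h : Fin t → Bool × Bool) : ℝ :=
  (∑ m, if (h m).2 = true then (if (h m).1 = false then (1 : ℝ) else -1) else 0) / t

/-- `r̄ᵗ_{R,L}` of player 2. -/
def rRL {t : ℕ} (h : Fin t → Bool × Bool) : ℝ :=
  (∑ m, if (h m).2 = false then (if (h m).1 = true then (1 : ℝ) else -1) else 0) / t

/-- Player 1's tie-breaking rule: when `p` is arbitrary, play `T` if the previous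
profile was `(B,L)`, play `B` if it was `(T,L)` or `(B,R)`. -/
def tb1 : (t : ℕ) → (Fin t → Bool × Bool) → ℝ
  | 0, _ => 1
  | (t + 1), h =>
      if h ⟨t, Nat.lt_succ_self t⟩ = (false, true) then 1
      else if h ⟨t, Nat.lt_succ_self t⟩ = (true, true) ∨
              h ⟨t, Nat.lt_succ_self t⟩ = (false, false) then 0
      else 1

/-- Player 2's tie-breaking rule: when `p` is arbitrary, play `L` if the previous
profile was `(B,R)` or `(B,L)`, play `R` if it was `(T,L)`. -/
def tb2 : (t : ℕ) → (Fin t → Bool × Bool) → ℝ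
  | 0, _ => 1
  | (t + 1), h =>
      if h ⟨t, Nat.lt_succ_self t⟩ = (false, false) ∨
          h ⟨t, Nat.lt_succ_self t⟩ = (false, true) then 1
      else if h ⟨t, Nat.lt_succ_self t⟩ = (true, true) then 0
      else 1

/-- Player 1's regret-matching strategy with the above tie-breaking. -/
def Q1 (t : ℕ) (h : Fin t → Bool × Bool) : ℝ :=
  if max (rTB h) 0 + max (rBT h) 0 = 0 then tb1 t h
  else max (rBT h) 0 / (max (rTB h) 0 + max (rBT h) 0)

/-- Player 2's regret-matching strategy with the above tie-breaking. -/
def Q2 (t : ℕ) (h : Fin t → Bool × Bool) : ℝ :=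
  if max (rLR h) 0 + max (rRL h) 0 = 0 then tb2 t h
  else max (rRL h) 0 / (max (rLR h) 0 + max (rRL h) 0)

/-- `play` is consistent with player 1 following `σ` (probability of `T`). -/
def Follows1 {Ω : Type} [MeasurableSpace Ω] (μ : Measure Ω)
    (play : ℕ → Ω → Bool × Bool)
    (σ : (t : ℕ) → (Fin t → Bool × Bool) → ℝ) : Prop :=
  ∀ (t : ℕ) (f : (Fin t → Bool × Bool) → Bool → ℝ),
    ∫ ω, (if (play t ω).1 = true then (1 : ℝ) else 0) *
        f (fun s => play s.1 ω) (play t ω).2 ∂μ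
      = ∫ ω, σ t (fun s => play s.1 ω) * f (fun s => play s.1 ω) (play t ω).2 ∂μ

/-- `play` is consistent with player 2 following `σ` (probability of `L`). -/
def Follows2 {Ω : Type} [MeasurableSpace Ω] (μ : Measure Ω)
    (play : ℕ → Ω → Bool × Bool)
    (σ : (t : ℕ) → (Fin t → Bool × Bool) → ℝ) : Prop :=
  ∀ (t : ℕ) (f : (Fin t → Bool × Bool) → Bool → ℝ),
    ∫ ω, (if (play t ω).2 = true then (1 : ℝ) else 0) *
        f (fun s => play s.1 ω) (play t ω).1 ∂μ
      = ∫ ω, σ t (fun s => play s.1 ω) * f (fun s => play s.1 ω) (play t ω).1 ∂μ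

/-- A strategy `σ` of player 1 has no (external) regret. -/
def NoRegret1 (σ : (t : ℕ) → (Fin t → Bool × Bool) → ℝ) : Prop :=
  ∀ (Ω : Type) (_ : MeasurableSpace Ω) (μ : Measure Ω), IsProbabilityMeasure μ →
    ∀ play : ℕ → Ω → Bool × Bool, (∀ t, Measurable (play t)) →
      Follows1 μ play σ →
      ∀ b : Bool, ∀ᵐ ω ∂μ, Tendsto
        (fun M : ℕ => max ((∑ t ∈ Finset.range M,
          (uL b (play t ω).2 - uL (play t ω).1 (play t ω).2)) / M) 0)
        atTop (nhds 0)

/-- A strategy `σ` of player 2 has no (external) regret. -/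
def NoRegret2 (σ : (t : ℕ) → (Fin t → Bool × Bool) → ℝ) : Prop :=
  ∀ (Ω : Type) (_ : MeasurableSpace Ω) (μ : Measure Ω), IsProbabilityMeasure μ →
    ∀ play : ℕ → Ω → Bool × Bool, (∀ t, Measurable (play t)) →
      Follows2 μ play σ →
      ∀ b : Bool, ∀ᵐ ω ∂μ, Tendsto
        (fun M : ℕ => max ((∑ t ∈ Finset.range M,
          (uL (play t ω).1 b - uL (play t ω).1 (play t ω).2)) / M) 0)
        atTop (nhds 0)

/-- The period-3 cycle `(T,L), (B,R), (B,L), ...`. -/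
def cyc (t : ℕ) : Bool × Bool :=
  if t % 3 = 0 then (true, true) else if t % 3 = 1 then (false, false)
  else (false, true)

/-- Expected value of a payoff function under a mixed profile `(z₁, z₂)`. -/
def pay (f : Bool → Bool → ℝ) (z₁ z₂ : Bool → ℝ) : ℝ :=
  ∑ a, ∑ b, z₁ a * z₂ b * f a b

/-!
Along the cycle no cumulative regret of either learner is ever positive, so regret matching
always defers to the tie-breaking rules, and these reproduce the cycle. Once the history is
almost surely deterministic, the `Follows` conditions pin down the next profile, so play is the
cycle almost surely and the optimizer averages `(0 + 0 - 1) / 3`. The mutual best responses of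
the coordination game are `(T,L)`, `(B,R)` and the uniform pair, all worth `0` to the optimizer.

Regret matching has no regret whatever its tie-breaking rule, by Blackwell's potential argument:
`Φ_t = ∑_b (R_t^b)⁺²` satisfies `Φ_{t+1} ≤ Φ_t + 2 Z_t + 2`, and the cross terms `Z_t` are
orthogonal to the past because the probability `q` of `T` satisfies `q (A + B) = B`. Hence
`E[(∑_{t<M} Z_t)²] ≤ 4 M³`, Borel–Cantelli gives `∑_{t<M} Z_t = o(M²)` along `M = n²`,
increments of size `O(M)` fill the gaps, and so `(R_M^b)⁺ = o(M)` almost surely. Player 2 is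
player 1 of the transposed game.
-/

lemma abs_sum_range_le_of_abs_le_mul {a : ℕ → ℝ} {c : ℝ} (hc : 0 ≤ c)
    (ha : ∀ t, |a t| ≤ c * t) (M : ℕ) : |∑ t ∈ range M, a t| ≤ c * M * M :=
  calc |∑ t ∈ range M, a t| ≤ ∑ t ∈ range M, c * t :=
        (abs_sum_le_sum_abs _ _).trans (sum_le_sum fun t _ => ha t)
    _ ≤ ∑ _t ∈ range M, c * M := sum_le_sum fun t ht => by
        have : (t : ℝ) ≤ M := by exact_mod_cast (mem_range.1 ht).le
        gcongr
    _ = c * M * M := by simp; ring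

section Analysis

variable {Ω : Type*} [MeasurableSpace Ω] {μ : Measure Ω}

lemma ae_tendsto_zero_of_summable_integral_sq {q : ℕ → Ω → ℝ}
    (hint : ∀ n, Integrable (fun ω => q n ω ^ 2) μ)
    (hsum : Summable fun n => ∫ ω, q n ω ^ 2 ∂μ) :
    ∀ᵐ ω ∂μ, Tendsto (fun n => q n ω) atTop (nhds 0) := by
  let F : ℕ → Ω → ENNReal := fun n ω => ENNReal.ofReal (q n ω ^ 2)
  have hF : ∀ n, AEMeasurable (F n) μ := fun n => (hint n).aemeasurable.ennreal_ofReal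
  have hlint (n : ℕ) : ∫⁻ ω, F n ω ∂μ = ENNReal.ofReal (∫ ω, q n ω ^ 2 ∂μ) :=
    (ofReal_integral_eq_lintegral_ofReal (hint n) (ae_of_all _ fun ω => sq_nonneg _)).symm
  have hfin : ∫⁻ ω, ∑' n, F n ω ∂μ ≠ ⊤ := by
    rw [lintegral_tsum hF, tsum_congr hlint,
      ← ENNReal.ofReal_tsum_of_nonneg (fun n => integral_nonneg fun ω => sq_nonneg _) hsum]
    exact ENNReal.ofReal_ne_top
  filter_upwards [ae_lt_top' (AEMeasurable.tsum hF) hfin] with ω hω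
  have hsq : Tendsto (fun n => q n ω ^ 2) atTop (nhds 0) := by
    have := (ENNReal.tendsto_toReal ENNReal.zero_ne_top).comp
      (ENNReal.tendsto_atTop_zero_of_tsum_ne_top hω.ne)
    exact this.congr fun n => ENNReal.toReal_ofReal (sq_nonneg _)
  have habs : Tendsto (fun n => |q n ω|) atTop (nhds 0) := by
    simpa [Real.sqrt_sq_eq_abs] using hsq.sqrt
  exact (tendsto_zero_iff_abs_tendsto_zero _).2 habs

lemma integral_sum_sq_le_of_orthogonal [IsProbabilityMeasure μ] {Z : ℕ → Ω → ℝ} {c : ℝ}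
    (hmeas : ∀ t, Measurable (Z t)) (hbound : ∀ t ω, |Z t ω| ≤ c * t)
    (horth : ∀ M, ∫ ω, Z M ω * ∑ t ∈ range M, Z t ω ∂μ = 0) (M : ℕ) :
    ∫ ω, (∑ t ∈ range M, Z t ω) ^ 2 ∂μ ≤ c ^ 2 * M ^ 3 := by
  have hc : 0 ≤ c := by
    obtain ⟨ω⟩ := nonempty_of_isProbabilityMeasure μ
    simpa using (abs_nonneg _).trans (hbound 1 ω)
  have hint : ∀ {f : Ω → ℝ} (C : ℝ), Measurable f → (∀ ω, |f ω| ≤ C) →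
      Integrable f μ :=
    fun C hf hC => .of_bound hf.aestronglyMeasurable C (ae_of_all _ hC)
  induction M with
  | zero => simp
  | succ M ih =>
    set S : Ω → ℝ := fun ω => ∑ t ∈ range M, Z t ω
    have hS : ∀ ω, |S ω| ≤ c * M * M := fun ω =>
      abs_sum_range_le_of_abs_le_mul hc (hbound · ω) M
    have hmS : Measurable S := measurable_sum _ fun t _ => hmeas t
    have iS : Integrable (fun ω => S ω ^ 2) μ := hint _ (hmS.pow_const 2) fun ω => by
      rw [abs_pow]; exact pow_le_pow_left₀ (abs_nonneg _) (hS ω) 2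
    have iZS : Integrable (fun ω => Z M ω * S ω) μ := hint _ ((hmeas M).mul hmS) fun ω => by
      rw [abs_mul]
      exact mul_le_mul (hbound M ω) (hS ω) (abs_nonneg _) (by positivity)
    have iZ : Integrable (fun ω => Z M ω ^ 2) μ := hint _ ((hmeas M).pow_const 2) fun ω => by
      rw [abs_pow]; exact pow_le_pow_left₀ (abs_nonneg _) (hbound M ω) 2
    have hZ : ∫ ω, Z M ω ^ 2 ∂μ ≤ (c * M) ^ 2 := by
      simpa using integral_mono iZ (integrable_const ((c * M) ^ 2)) fun ω =>
        sq_le_sq' (abs_le.1 (hbound M ω)).1 (abs_le.1 (hbound M ω)).2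
    calc ∫ ω, (∑ t ∈ range (M + 1), Z t ω) ^ 2 ∂μ
        = ∫ ω, S ω ^ 2 + 2 * (Z M ω * S ω) + Z M ω ^ 2 ∂μ := by
          congr 1; ext ω; rw [sum_range_succ]; ring
      _ = ∫ ω, S ω ^ 2 ∂μ + 2 * ∫ ω, Z M ω * S ω ∂μ + ∫ ω, Z M ω ^ 2 ∂μ := by
          have iSZS : Integrable (fun ω => S ω ^ 2 + 2 * (Z M ω * S ω)) μ :=
            iS.add (iZS.const_mul 2)
          rw [integral_add iSZS iZ, integral_add iS (iZS.const_mul 2), integral_const_mul]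
      _ ≤ c ^ 2 * M ^ 3 + 2 * 0 + (c * M) ^ 2 := by rw [horth M]; gcongr
      _ ≤ c ^ 2 * ↑(M + 1) ^ 3 := by
          push_cast; nlinarith [sq_nonneg c, (Nat.cast_nonneg M : (0 : ℝ) ≤ M)]

end Analysis

lemma tendsto_natSqrt_atTop : Tendsto Nat.sqrt atTop atTop :=
  tendsto_atTop_atTop.2 fun b => ⟨b * b, fun _ ha => Nat.le_sqrt.2 ha⟩

lemma abs_sub_le_of_abs_succ_sub_le {p : ℕ → ℝ} {c : ℝ} (hc : 0 ≤ c)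
    (hinc : ∀ t, |p (t + 1) - p t| ≤ c * t) (a k : ℕ) :
    |p (a + k) - p a| ≤ c * k * (a + k) := by
  induction k with
  | zero => simp
  | succ k ih =>
    have hstep := hinc (a + k)
    have htri := abs_sub_le (p (a + k + 1)) (p (a + k)) (p a)
    rw [← add_assoc]
    push_cast at *
    nlinarith

lemma abs_div_sq_le_of_abs_succ_sub_le {p : ℕ → ℝ} {c : ℝ} (hc : 0 ≤ c)
    (hinc : ∀ t, |p (t + 1) - p t| ≤ c * t) {M : ℕ} (hM : 1 ≤ M) :
    |p M / (M : ℝ) ^ 2|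
      ≤ |p (M.sqrt ^ 2) / ((M.sqrt ^ 2 : ℕ) : ℝ) ^ 2| + 8 * c / M.sqrt := by
  set n := M.sqrt
  have hn : (1 : ℝ) ≤ n := by exact_mod_cast Nat.sqrt_pos.2 hM
  have hnM : n ^ 2 ≤ M := Nat.sqrt_le' M
  have hMn : M < (n + 1) ^ 2 := Nat.lt_succ_sqrt' M
  have hk : ((M - n ^ 2 : ℕ) : ℝ) ≤ 2 * n := by
    have : M ≤ n ^ 2 + 2 * n := by nlinarith
    exact_mod_cast (show M - n ^ 2 ≤ 2 * n by omega)
  have hnM' : (n : ℝ) ^ 2 ≤ M := by exact_mod_cast hnM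
  have hMn' : (M : ℝ) ≤ 4 * n ^ 2 := by
    have : M ≤ 4 * n ^ 2 := by nlinarith
    exact_mod_cast this
  have htel := abs_sub_le_of_abs_succ_sub_le hc hinc (n ^ 2) (M - n ^ 2)
  have hsplit : ((n ^ 2 : ℕ) : ℝ) + ((M - n ^ 2 : ℕ) : ℝ) = M := by
    exact_mod_cast Nat.add_sub_cancel' hnM
  rw [Nat.add_sub_cancel' hnM, hsplit] at htel
  have hdiff : |p M - p (n ^ 2)| ≤ 8 * c * n ^ 3 := by
    have := mul_le_mul hk hMn' (by positivity) (by positivity)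
    nlinarith [mul_le_mul_of_nonneg_left this hc]
  have hn4 : (0 : ℝ) < ((n : ℝ) ^ 2) ^ 2 := by positivity
  rw [abs_div, abs_of_nonneg (by positivity : (0 : ℝ) ≤ (M : ℝ) ^ 2)]
  calc |p M| / (M : ℝ) ^ 2 ≤ (|p (n ^ 2)| + 8 * c * n ^ 3) / ((n : ℝ) ^ 2) ^ 2 := by
        gcongr ?_ / ?_
        · linarith [abs_sub_abs_le_abs_sub (p M) (p (n ^ 2))]
        · gcongr
    _ = _ := by
        simp only [abs_div, Nat.cast_pow, abs_of_pos hn4]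
        field_simp

lemma tendsto_div_sq_of_tendsto_along_sq {p : ℕ → ℝ} {c : ℝ}
    (hinc : ∀ t, |p (t + 1) - p t| ≤ c * t)
    (hsq : Tendsto (fun n : ℕ => p (n ^ 2) / ((n ^ 2 : ℕ) : ℝ) ^ 2) atTop (nhds 0)) :
    Tendsto (fun M : ℕ => p M / (M : ℝ) ^ 2) atTop (nhds 0) := by
  have hc : 0 ≤ c := by simpa using (abs_nonneg _).trans (hinc 1)
  have hg := hsq.abs.add (tendsto_const_div_atTop_nhds_zero_nat (8 * c))
  rw [abs_zero, zero_add] at hg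
  refine squeeze_zero_norm' ?_ (hg.comp tendsto_natSqrt_atTop)
  filter_upwards [eventually_ge_atTop 1] with M hM
  exact abs_div_sq_le_of_abs_succ_sub_le hc hinc hM

def regret (b : Bool) (p : Bool × Bool) : ℝ := uL b p.2 - uL p.1 p.2

def cumRegret (b : Bool) (x : ℕ → Bool × Bool) (t : ℕ) : ℝ :=
  ∑ m ∈ range t, regret b (x m)

/-- The cross term `⟨R_t⁺, r_t⟩` of Blackwell's potential `‖R_t⁺‖²`. -/
def crossTerm (x : ℕ → Bool × Bool) (t : ℕ) : ℝ :=
  ∑ b, regret b (x t) * max (cumRegret b x t) 0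

def crossSum (x : ℕ → Bool × Bool) (M : ℕ) : ℝ := ∑ t ∈ range M, crossTerm x t

section Regret

variable (x y : ℕ → Bool × Bool)

lemma abs_regret_le_one (b : Bool) (p : Bool × Bool) : |regret b p| ≤ 1 := by
  rcases p with ⟨_ | _, _ | _⟩ <;> cases b <;> norm_num [regret, uL]

lemma max_cumRegret_le (b : Bool) (t : ℕ) : max (cumRegret b x t) 0 ≤ t := by
  refine max_le ?_ t.cast_nonneg
  calc cumRegret b x t ≤ ∑ _m ∈ range t, (1 : ℝ) :=
        sum_le_sum fun m _ => (le_abs_self _).trans (abs_regret_le_one b (x m))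
    _ = t := by simp

lemma abs_crossTerm_le (t : ℕ) : |crossTerm x t| ≤ 2 * t := by
  calc |crossTerm x t| ≤ ∑ b, |regret b (x t) * max (cumRegret b x t) 0| :=
        abs_sum_le_sum_abs _ _
    _ ≤ ∑ _b : Bool, (t : ℝ) := sum_le_sum fun b _ => by
        rw [abs_mul, abs_of_nonneg (le_max_right (cumRegret b x t) 0)]
        exact (mul_le_of_le_one_left (le_max_right _ _) (abs_regret_le_one _ _)).trans
          (max_cumRegret_le x b t)
    _ = 2 * t := by simp

lemma max_add_zero_sq_le (s r : ℝ) : max (s + r) 0 ^ 2 ≤ (max s 0 + r) ^ 2 := by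
  rcases le_or_gt (s + r) 0 with h | h
  · rw [max_eq_right h, sq, zero_mul]; positivity
  · rw [max_eq_left h.le]
    nlinarith [le_max_left s 0]

lemma potential_le_crossSum (M : ℕ) :
    ∑ b, max (cumRegret b x M) 0 ^ 2 ≤ 2 * crossSum x M + 2 * M := by
  induction M with
  | zero => simp [cumRegret, crossSum]
  | succ M ih =>
    have hstep : ∀ b, max (cumRegret b x (M + 1)) 0 ^ 2
        ≤ max (cumRegret b x M) 0 ^ 2
          + 2 * (regret b (x M) * max (cumRegret b x M) 0) + 1 := by
      intro b
      have hr : regret b (x M) ^ 2 ≤ 1 := by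
        simpa using pow_le_one₀ (abs_nonneg _) (abs_regret_le_one b (x M)) (n := 2)
      have := max_add_zero_sq_le (cumRegret b x M) (regret b (x M))
      have hsucc : cumRegret b x (M + 1) = cumRegret b x M + regret b (x M) :=
        sum_range_succ _ _
      rw [hsucc]
      nlinarith
    simp only [Fintype.sum_bool, crossSum, crossTerm, sum_range_succ] at ih hstep ⊢
    push_cast
    linarith [hstep true, hstep false]

lemma max_cumRegret_sq_le (b : Bool) (M : ℕ) :
    max (cumRegret b x M) 0 ^ 2 ≤ 2 * crossSum x M + 2 * M :=
  (single_le_sum (fun b _ => sq_nonneg (max (cumRegret b x M) 0)) (mem_univ b)).trans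
    (potential_le_crossSum x M)

variable {x y}

lemma cumRegret_congr {t : ℕ} (h : ∀ m < t, x m = y m) (b : Bool) :
    cumRegret b x t = cumRegret b y t :=
  sum_congr rfl fun m hm => by rw [h m (mem_range.1 hm)]

lemma crossSum_congr {M : ℕ} (h : ∀ m < M, x m = y m) : crossSum x M = crossSum y M :=
  sum_congr rfl fun t ht => by
    have ht := mem_range.1 ht
    simp only [crossTerm, h t ht, cumRegret_congr (fun m hm => h m (hm.trans ht))]

end Regret

/-- `Q1` is `regretMatching tb1`. -/
def regretMatching (tb : (t : ℕ) → (Fin t → Bool × Bool) → ℝ) (t : ℕ)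
    (h : Fin t → Bool × Bool) : ℝ :=
  if max (rTB h) 0 + max (rBT h) 0 = 0 then tb t h
  else max (rBT h) 0 / (max (rTB h) 0 + max (rBT h) 0)

section RegretMatching

variable (x : ℕ → Bool × Bool) (t : ℕ)

lemma rTB_eq_cumRegret : rTB (fun s : Fin t => x s) = cumRegret false x t / t := by
  rw [rTB, cumRegret, Fin.sum_univ_eq_sum_range
    (fun m => if (x m).1 = true then (if (x m).2 = false then (1 : ℝ) else -1) else 0)]
  congr 1
  refine sum_congr rfl fun m _ => ?_
  rcases x m with ⟨_ | _, _ | _⟩ <;> norm_num [regret, uL]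

lemma rBT_eq_cumRegret : rBT (fun s : Fin t => x s) = cumRegret true x t / t := by
  rw [rBT, cumRegret, Fin.sum_univ_eq_sum_range
    (fun m => if (x m).1 = false then (if (x m).2 = true then (1 : ℝ) else -1) else 0)]
  congr 1
  refine sum_congr rfl fun m _ => ?_
  rcases x m with ⟨_ | _, _ | _⟩ <;> norm_num [regret, uL]

lemma max_div_natCast (a : ℝ) : max (a / t) 0 = max a 0 / t := by
  rw [← max_div_div_right t.cast_nonneg, zero_div]

lemma regretMatching_mul_add (tb : (t : ℕ) → (Fin t → Bool × Bool) → ℝ) :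
    regretMatching tb t (fun s : Fin t => x s) *
        (max (cumRegret false x t) 0 + max (cumRegret true x t) 0)
      = max (cumRegret true x t) 0 := by
  rcases t.eq_zero_or_pos with rfl | ht
  · simp [cumRegret]
  have ht : (t : ℝ) ≠ 0 := by positivity
  rw [regretMatching, rTB_eq_cumRegret, rBT_eq_cumRegret, max_div_natCast, max_div_natCast,
    ← add_div, div_div_div_cancel_right₀ ht]
  have hA := le_max_right (cumRegret false x t) 0
  have hB := le_max_right (cumRegret true x t) 0
  generalize max (cumRegret false x t) 0 = A, max (cumRegret true x t) 0 = B at *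
  split_ifs with hAB
  · rw [div_eq_zero_iff, or_iff_left ht] at hAB
    obtain rfl : B = 0 := by linarith
    obtain rfl : A = 0 := by linarith
    simp
  · have hAB : A + B ≠ 0 := fun h => hAB (by simp [h])
    field_simp

lemma regretMatching_eq_of_cumRegret_nonpos (tb : (t : ℕ) → (Fin t → Bool × Bool) → ℝ)
    (h : ∀ b, cumRegret b x t ≤ 0) :
    regretMatching tb t (fun s : Fin t => x s) = tb t (fun s : Fin t => x s) := by
  rw [regretMatching, rTB_eq_cumRegret, rBT_eq_cumRegret, max_div_natCast, max_div_natCast,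
    max_eq_right (h false), max_eq_right (h true)]
  simp

end RegretMatching

def extendHist {t : ℕ} (h : Fin t → Bool × Bool) : ℕ → Bool × Bool :=
  fun m => if hm : m < t then h ⟨m, hm⟩ else (true, true)

lemma extendHist_apply (x : ℕ → Bool × Bool) {t m : ℕ} (hm : m < t) :
    extendHist (fun s : Fin t => x s) m = x m :=
  dif_pos hm

lemma cumRegret_extendHist (x : ℕ → Bool × Bool) (t : ℕ) (b : Bool) :
    cumRegret b (extendHist (fun s : Fin t => x s)) t = cumRegret b x t :=
  cumRegret_congr (fun _ hm => extendHist_apply x hm) b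

lemma crossSum_extendHist (x : ℕ → Bool × Bool) (M : ℕ) :
    crossSum (extendHist (fun s : Fin M => x s)) M = crossSum x M :=
  crossSum_congr fun _ hm => extendHist_apply x hm

lemma abs_crossSum_le (x : ℕ → Bool × Bool) (M : ℕ) : |crossSum x M| ≤ 2 * M ^ 2 := by
  simpa [crossSum, sq, mul_assoc] using
    abs_sum_range_le_of_abs_le_mul zero_le_two (abs_crossTerm_le x) M

lemma abs_crossSum_div_sq_le (x : ℕ → Bool × Bool) (M : ℕ) :
    |crossSum x M / (M : ℝ) ^ 2| ≤ 2 := by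
  rcases M.eq_zero_or_pos with rfl | hM
  · simp
  have hM2 : (0 : ℝ) < (M : ℝ) ^ 2 := by positivity
  rw [abs_div, abs_of_pos hM2, div_le_iff₀ hM2]
  exact abs_crossSum_le x M

section Play

variable {Ω : Type} [MeasurableSpace Ω] {μ : Measure Ω} {play : ℕ → Ω → Bool × Bool}
  {tb : (t : ℕ) → (Fin t → Bool × Bool) → ℝ}

lemma measurable_crossTerm (hm : ∀ t, Measurable (play t)) (t : ℕ) :
    Measurable fun ω => crossTerm (fun m => play m ω) t := by
  have : ∀ b m, Measurable fun ω => regret b (play m ω) := fun b m =>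
    (Measurable.of_discrete (f := regret b)).comp (hm m)
  unfold crossTerm cumRegret
  fun_prop

lemma measurable_crossSum (hm : ∀ t, Measurable (play t)) (M : ℕ) :
    Measurable fun ω => crossSum (fun m => play m ω) M :=
  measurable_sum _ fun t _ => measurable_crossTerm hm t

/-- Histories of a fixed length and profiles range over a finite set, so `G` is bounded. -/
lemma integrable_comp_hist [IsFiniteMeasure μ] (hm : ∀ t, Measurable (play t)) (t : ℕ)
    (G : (Fin t → Bool × Bool) × (Bool × Bool) → ℝ) :
    Integrable (fun ω => G ((fun s : Fin t => play s ω), play t ω)) μ := by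
  obtain ⟨C, hC⟩ := Finite.exists_le fun q => ‖G q‖
  exact .of_bound (Measurable.of_discrete.comp
    ((measurable_pi_lambda _ fun s : Fin t => hm s).prodMk (hm t))).aestronglyMeasurable C
    (ae_of_all _ fun ω => hC _)

/-- Given the past and player 2's action, player 1 plays `T` with probability `q`, and
`q (A + B) = B` makes the conditional mean of the cross term vanish. -/
lemma integral_crossTerm_mul_eq_zero [IsProbabilityMeasure μ] (hm : ∀ t, Measurable (play t))
    (hF : Follows1 μ play (regretMatching tb)) (t : ℕ) (g : (Fin t → Bool × Bool) → ℝ) :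
    ∫ ω, crossTerm (fun m => play m ω) t * g (fun s : Fin t => play s ω) ∂μ = 0 := by
  let d : Bool → ℝ := fun c => uL false c - uL true c
  let R : Bool → (Fin t → Bool × Bool) → ℝ := fun b h =>
    max (cumRegret b (extendHist h) t) 0
  let f : (Fin t → Bool × Bool) → Bool → ℝ := fun h c => d c * (R false h + R true h) * g h
  have hsplit : ∀ ω, crossTerm (fun m => play m ω) t * g (fun s : Fin t => play s ω)
      = (if (play t ω).1 = true then 1 else 0) * f (fun s : Fin t => play s ω) (play t ω).2
        - d (play t ω).2 * R true (fun s : Fin t => play s ω)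
          * g (fun s : Fin t => play s ω) := by
    intro ω
    simp only [f, R, cumRegret_extendHist (fun m => play m ω), crossTerm, Fintype.sum_bool]
    rcases play t ω with ⟨_ | _, _ | _⟩ <;> simp [d, regret, uL] <;> ring
  have hmatch : ∀ ω, regretMatching tb t (fun s : Fin t => play s ω) *
      f (fun s : Fin t => play s ω) (play t ω).2
        - d (play t ω).2 * R true (fun s : Fin t => play s ω) * g (fun s : Fin t => play s ω)
      = 0 := by
    intro ω
    have := regretMatching_mul_add (fun m => play m ω) t tb
    simp only [f, R, cumRegret_extendHist (fun m => play m ω)]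
    linear_combination d (play t ω).2 * g (fun s : Fin t => play s ω) * this
  have i1 := integrable_comp_hist (μ := μ) hm t fun q =>
    (if q.2.1 = true then 1 else 0) * f q.1 q.2.2
  have i2 := integrable_comp_hist (μ := μ) hm t fun q => regretMatching tb t q.1 * f q.1 q.2.2
  have i3 := integrable_comp_hist (μ := μ) hm t fun q => d q.2.2 * R true q.1 * g q.1
  rw [integral_congr_ae (ae_of_all _ hsplit), integral_sub i1 i3, hF t f, ← integral_sub i2 i3,
    integral_congr_ae (ae_of_all _ hmatch), integral_zero]

lemma integral_crossSum_sq_le [IsProbabilityMeasure μ] (hm : ∀ t, Measurable (play t))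
    (hF : Follows1 μ play (regretMatching tb)) (M : ℕ) :
    ∫ ω, crossSum (fun m => play m ω) M ^ 2 ∂μ ≤ 4 * M ^ 3 := by
  have horth : ∀ M, ∫ ω, crossTerm (fun m => play m ω) M
      * ∑ t ∈ range M, crossTerm (fun m => play m ω) t ∂μ = 0 := fun M => by
    rw [← integral_crossTerm_mul_eq_zero hm hF M fun h => crossSum (extendHist h) M]
    congr 1 with ω
    rw [crossSum_extendHist (fun m => play m ω)]
    rfl
  have := integral_sum_sq_le_of_orthogonal (measurable_crossTerm hm)
    (fun t ω => abs_crossTerm_le _ t) horth M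
  norm_num at this
  exact this

lemma ae_tendsto_crossSum_div_sq [IsProbabilityMeasure μ] (hm : ∀ t, Measurable (play t))
    (hF : Follows1 μ play (regretMatching tb)) :
    ∀ᵐ ω ∂μ, Tendsto (fun M : ℕ => crossSum (fun m => play m ω) M / (M : ℝ) ^ 2)
      atTop (nhds 0) := by
  let q : ℕ → Ω → ℝ := fun n ω =>
    crossSum (fun m => play m ω) (n ^ 2) / ((n ^ 2 : ℕ) : ℝ) ^ 2
  have hint : ∀ n, Integrable (fun ω => q n ω ^ 2) μ := fun n =>
    .of_bound (((measurable_crossSum hm _).div_const _).pow_const 2).aestronglyMeasurable 4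
      (ae_of_all _ fun ω => by
        rw [Real.norm_eq_abs, abs_pow]
        nlinarith [abs_crossSum_div_sq_le (fun m => play m ω) (n ^ 2), abs_nonneg (q n ω)])
  have hbound : ∀ n : ℕ, ∫ ω, q n ω ^ 2 ∂μ ≤ 4 / (n : ℝ) ^ 2 := fun n => by
    rcases n.eq_zero_or_pos with rfl | hn
    · simp [q]
    calc ∫ ω, q n ω ^ 2 ∂μ
        = (∫ ω, crossSum (fun m => play m ω) (n ^ 2) ^ 2 ∂μ)
            / (((n ^ 2 : ℕ) : ℝ) ^ 2) ^ 2 := by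
          simp only [q, div_pow]; exact integral_div _ _
      _ ≤ 4 * ((n ^ 2 : ℕ) : ℝ) ^ 3 / (((n ^ 2 : ℕ) : ℝ) ^ 2) ^ 2 := by
          gcongr; exact integral_crossSum_sq_le hm hF _
      _ = 4 / (n : ℝ) ^ 2 := by push_cast; field_simp
  have hsum : Summable fun n => ∫ ω, q n ω ^ 2 ∂μ :=
    .of_nonneg_of_le (fun n => integral_nonneg fun ω => sq_nonneg _) hbound
      ((Real.summable_one_div_nat_pow.2 one_lt_two).mul_left 4 |>.congr fun n => by ring)
  filter_upwards [ae_tendsto_zero_of_summable_integral_sq hint hsum] with ω hω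
  refine tendsto_div_sq_of_tendsto_along_sq (p := fun M => crossSum (fun m => play m ω) M)
    (c := 2) (fun t => ?_) hω
  rw [crossSum, crossSum, sum_range_succ, add_sub_cancel_left]
  exact abs_crossTerm_le _ t

end Play

lemma max_cumRegret_div_le_sqrt (x : ℕ → Bool × Bool) (b : Bool) {M : ℕ} (hM : 0 < M) :
    max (cumRegret b x M / M) 0 ≤ √(2 * (crossSum x M / (M : ℝ) ^ 2) + 2 / M) := by
  have hM : (0 : ℝ) < M := by exact_mod_cast hM
  rw [max_div_natCast, ← abs_of_nonneg (div_nonneg (le_max_right (cumRegret b x M) 0) hM.le)]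
  refine Real.abs_le_sqrt ?_
  calc (max (cumRegret b x M) 0 / M) ^ 2 ≤ (2 * crossSum x M + 2 * M) / (M : ℝ) ^ 2 := by
        rw [div_pow]; gcongr; exact max_cumRegret_sq_le x b M
    _ = 2 * (crossSum x M / (M : ℝ) ^ 2) + 2 / M := by field_simp

/-- Hart and Mas-Colell's theorem. -/
theorem noRegret1_regretMatching (tb : (t : ℕ) → (Fin t → Bool × Bool) → ℝ) :
    NoRegret1 (regretMatching tb) := by
  intro Ω _ μ _ play hm hF b
  filter_upwards [ae_tendsto_crossSum_div_sq hm hF] with ω hω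
  have hlim : Tendsto
      (fun M : ℕ => √(2 * (crossSum (fun m => play m ω) M / (M : ℝ) ^ 2) + 2 / M))
      atTop (nhds 0) := by
    simpa using ((hω.const_mul 2).add (tendsto_const_div_atTop_nhds_zero_nat 2)).sqrt
  refine squeeze_zero' (Eventually.of_forall fun M => le_max_right _ _) ?_ hlim
  filter_upwards [eventually_gt_atTop 0] with M hM
  exact max_cumRegret_div_le_sqrt (fun m => play m ω) b hM

lemma uL_comm (a b : Bool) : uL a b = uL b a := by
  cases a <;> cases b <;> rfl

lemma Q2_eq_regretMatching (t : ℕ) (h : Fin t → Bool × Bool) :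
    Q2 t h = regretMatching (fun t h => tb2 t (Prod.swap ∘ h)) t (Prod.swap ∘ h) :=
  rfl

lemma Follows2.swap {Ω : Type} [MeasurableSpace Ω] {μ : Measure Ω}
    {play : ℕ → Ω → Bool × Bool} {σ : (t : ℕ) → (Fin t → Bool × Bool) → ℝ}
    (hF : Follows2 μ play σ) :
    Follows1 μ (fun t ω => (play t ω).swap) (fun t h => σ t (Prod.swap ∘ h)) :=
  fun t f => hF t fun h c => f (Prod.swap ∘ h) c

theorem noRegret2_Q2 : NoRegret2 Q2 := by
  intro Ω _ μ hμ play hm hF b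
  filter_upwards [noRegret1_regretMatching (fun t h => tb2 t (Prod.swap ∘ h)) Ω _ μ hμ _
    (fun t => measurable_swap.comp (hm t)) hF.swap b] with ω hω
  refine hω.congr fun M => ?_
  congr 3 with t
  show uL b (play t ω).1 - uL (play t ω).2 (play t ω).1 = _
  rw [uL_comm b, uL_comm (play t ω).2]

lemma sum_range_add_three_cyc (w : Bool × Bool → ℝ) (t : ℕ) :
    ∑ m ∈ range (t + 3), w (cyc m)
      = ∑ m ∈ range t, w (cyc m) + (w (true, true) + w (false, false) + w (false, true)) := by
  simp only [sum_range_succ, add_assoc, cyc]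
  have : t % 3 = 0 ∨ t % 3 = 1 ∨ t % 3 = 2 := by omega
  rcases this with h | h | h <;> simp [h, Nat.add_mod] <;> ring

lemma sum_range_cyc_nonpos (w : Bool × Bool → ℝ) (h₁ : w (true, true) ≤ 0)
    (h₂ : w (true, true) + w (false, false) ≤ 0)
    (h₃ : w (true, true) + w (false, false) + w (false, true) ≤ 0) (t : ℕ) :
    ∑ m ∈ range t, w (cyc m) ≤ 0 := by
  induction t using Nat.strong_induction_on with
  | _ t ih =>
    rcases lt_or_ge t 3 with ht | ht
    · interval_cases t <;> simp [sum_range_succ, cyc, h₁, h₂]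
    · obtain ⟨s, rfl⟩ := Nat.exists_eq_add_of_le' ht
      rw [sum_range_add_three_cyc]
      linarith [ih s (by omega)]

lemma sum_range_u3_cyc (M : ℕ) : ∑ t ∈ range M, u3 (cyc t) = -((M / 3 : ℕ) : ℝ) := by
  induction M using Nat.strong_induction_on with
  | _ M ih =>
    rcases lt_or_ge M 3 with hM | hM
    · interval_cases M <;> simp [sum_range_succ, cyc, u3]
    · obtain ⟨s, rfl⟩ := Nat.exists_eq_add_of_le' hM
      rw [sum_range_add_three_cyc, ih s (by omega), Nat.add_div_right s three_pos]
      norm_num [u3]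
      ring

lemma tendsto_average_u3_cyc :
    Tendsto (fun M : ℕ => (∑ t ∈ range M, u3 (cyc t)) / M) atTop (nhds (-1 / 3)) := by
  have hfloor :
      Tendsto (fun M : ℕ => (⌊(M : ℝ) / 3⌋₊ : ℝ) / ((M : ℝ) / 3)) atTop (nhds 1) :=
    tendsto_nat_floor_div_atTop.comp
      (tendsto_natCast_atTop_atTop.atTop_div_const (by norm_num : (0 : ℝ) < 3))
  have h := hfloor.const_mul (-1 / 3)
  rw [mul_one] at h
  refine h.congr' ?_
  filter_upwards [eventually_gt_atTop 0] with M hM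
  have hfl : ⌊(M : ℝ) / 3⌋₊ = M / 3 := by exact_mod_cast Nat.floor_div_eq_div (K := ℝ) M 3
  have hM : (M : ℝ) ≠ 0 := by positivity
  rw [sum_range_u3_cyc, hfl]
  field_simp

lemma cumRegret_cyc_nonpos (b : Bool) (t : ℕ) : cumRegret b cyc t ≤ 0 :=
  sum_range_cyc_nonpos (regret b) (by cases b <;> norm_num [regret, uL])
    (by cases b <;> norm_num [regret, uL]) (by cases b <;> norm_num [regret, uL]) t

lemma cumRegret_swap_cyc_nonpos (b : Bool) (t : ℕ) : cumRegret b (Prod.swap ∘ cyc) t ≤ 0 :=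
  sum_range_cyc_nonpos (fun p => regret b p.swap) (by cases b <;> norm_num [regret, uL])
    (by cases b <;> norm_num [regret, uL]) (by cases b <;> norm_num [regret, uL]) t

/-- No regret is ever positive along the cycle, so the tie-breaking rules alone drive the play. -/
lemma Q1_cyc (t : ℕ) : Q1 t (fun s : Fin t => cyc s) = if (cyc t).1 = true then 1 else 0 := by
  refine (regretMatching_eq_of_cumRegret_nonpos cyc t tb1 (cumRegret_cyc_nonpos · t)).trans ?_
  rcases t with _ | k
  · rfl
  · have : k % 3 = 0 ∨ k % 3 = 1 ∨ k % 3 = 2 := by omega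
    rcases this with h | h | h <;> simp [tb1, cyc, h, Nat.add_mod]

lemma Q2_cyc (t : ℕ) : Q2 t (fun s : Fin t => cyc s) = if (cyc t).2 = true then 1 else 0 := by
  rw [Q2_eq_regretMatching]
  refine (regretMatching_eq_of_cumRegret_nonpos (Prod.swap ∘ cyc) t
    (fun t h => tb2 t (Prod.swap ∘ h)) (cumRegret_swap_cyc_nonpos · t)).trans ?_
  rcases t with _ | k
  · rfl
  · have : k % 3 = 0 ∨ k % 3 = 1 ∨ k % 3 = 2 := by omega
    rcases this with h | h | h <;> simp [tb2, cyc, h, Nat.add_mod]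

section Determinism

variable {Ω : Type} [MeasurableSpace Ω] {μ : Measure Ω} [IsProbabilityMeasure μ]
  {play : ℕ → Ω → Bool × Bool}

lemma ae_eq_of_integral_ite_eq {X : Ω → Bool} (hX : Measurable X) {b : Bool}
    (h : ∫ ω, (if X ω = true then (1 : ℝ) else 0) ∂μ = if b = true then 1 else 0) :
    ∀ᵐ ω ∂μ, X ω = b := by
  have hint : Integrable (fun ω => if X ω = true then (1 : ℝ) else 0) μ :=
    .of_bound ((Measurable.of_discrete
      (f := fun b : Bool => if b = true then (1 : ℝ) else 0)).comp hX).aestronglyMeasurable 1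
      (ae_of_all _ fun ω => by split_ifs <;> norm_num)
  cases b
  · have := (integral_eq_zero_iff_of_nonneg (fun ω => by dsimp only; split_ifs <;> norm_num)
      hint).1 (by simpa using h)
    filter_upwards [this] with ω hω
    simpa using hω
  · have h0 : ∫ ω, (1 - if X ω = true then (1 : ℝ) else 0) ∂μ = 0 := by
      rw [integral_sub (integrable_const 1) hint, h]; simp
    have := (integral_eq_zero_iff_of_nonneg
      (fun ω => by simp only [Pi.zero_apply, Pi.sub_apply]; split_ifs <;> norm_num)
      ((integrable_const 1).sub hint)).1 h0
    filter_upwards [this] with ω hω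
    simpa [sub_eq_zero] using hω

lemma ae_fst_eq_of_follows1 (hm : ∀ t, Measurable (play t))
    {σ : (t : ℕ) → (Fin t → Bool × Bool) → ℝ} (hF : Follows1 μ play σ) {t : ℕ}
    {h₀ : Fin t → Bool × Bool} (hh : ∀ᵐ ω ∂μ, (fun s : Fin t => play s ω) = h₀)
    {b : Bool}
    (hσ : σ t h₀ = if b = true then 1 else 0) : ∀ᵐ ω ∂μ, (play t ω).1 = b := by
  refine ae_eq_of_integral_ite_eq (hm t).fst ?_
  have := hF t fun _ _ => 1
  simp only [mul_one] at this
  rw [this, integral_congr_ae (hh.mono fun ω hω => congrArg (σ t) hω), integral_const, hσ]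
  simp

lemma ae_snd_eq_of_follows2 (hm : ∀ t, Measurable (play t))
    {σ : (t : ℕ) → (Fin t → Bool × Bool) → ℝ} (hF : Follows2 μ play σ) {t : ℕ}
    {h₀ : Fin t → Bool × Bool} (hh : ∀ᵐ ω ∂μ, (fun s : Fin t => play s ω) = h₀)
    {b : Bool}
    (hσ : σ t h₀ = if b = true then 1 else 0) : ∀ᵐ ω ∂μ, (play t ω).2 = b :=
  ae_fst_eq_of_follows1 (fun t => measurable_swap.comp (hm t)) hF.swap
    (hh.mono fun _ hω => congrArg (Prod.swap ∘ ·) hω) hσ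

lemma ae_play_eq_cyc (hm : ∀ t, Measurable (play t)) (hF1 : Follows1 μ play Q1)
    (hF2 : Follows2 μ play Q2) : ∀ᵐ ω ∂μ, ∀ t, play t ω = cyc t := by
  refine ae_all_iff.2 fun t => ?_
  induction t using Nat.strong_induction_on with
  | _ t ih =>
    have hh : ∀ᵐ ω ∂μ, (fun s : Fin t => play s ω) = fun s : Fin t => cyc s := by
      filter_upwards [ae_all_iff.2 fun s : Fin t => ih s s.2] with ω hω using funext hω
    filter_upwards [ae_fst_eq_of_follows1 hm hF1 hh (Q1_cyc t),
      ae_snd_eq_of_follows2 hm hF2 hh (Q2_cyc t)] with ω h₁ h₂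
    exact Prod.ext h₁ h₂

end Determinism

lemma pay_uL (z₁ z₂ : Bool → ℝ) :
    pay uL z₁ z₂ = z₁ true * z₂ true + z₁ false * z₂ false := by
  simp [pay, uL]

lemma pay_u3 (z₁ z₂ : Bool → ℝ) :
    pay (fun a b => u3 (a, b)) z₁ z₂ = z₁ true * z₂ false - z₁ false * z₂ true := by
  simp [pay, u3]
  ring

/-- Every Nash equilibrium of the learners' coordination game, pure (`(T,L)`, `(B,R)`) or mixed
(both uniform), gives the optimizer `0`. -/
lemma pay_u3_eq_zero_of_isNash {z₁ z₂ : Bool → ℝ} (hz₁ : z₁ ∈ stdSimplex ℝ Bool)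
    (hz₂ : z₂ ∈ stdSimplex ℝ Bool)
    (hbr₁ : ∀ w ∈ stdSimplex ℝ Bool, pay uL w z₂ ≤ pay uL z₁ z₂)
    (hbr₂ : ∀ w ∈ stdSimplex ℝ Bool, pay uL z₁ w ≤ pay uL z₁ z₂) :
    pay (fun a b => u3 (a, b)) z₁ z₂ = 0 := by
  obtain ⟨hp, hp₁⟩ := hz₁
  obtain ⟨hq, hq₁⟩ := hz₂
  rw [Fintype.sum_bool] at hp₁ hq₁
  have h₁ := hbr₁ _ (single_mem_stdSimplex ℝ true)
  have h₂ := hbr₁ _ (single_mem_stdSimplex ℝ false)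
  have h₃ := hbr₂ _ (single_mem_stdSimplex ℝ true)
  have h₄ := hbr₂ _ (single_mem_stdSimplex ℝ false)
  simp only [pay_uL, Pi.single_apply] at h₁ h₂ h₃ h₄
  norm_num at h₁ h₂ h₃ h₄
  have hpq : z₁ true = z₂ true := by
    have := hp true; have := hp false; have := hq true; have := hq false
    rcases lt_trichotomy (z₂ true) (1 / 2) with h | h | h <;> nlinarith
  rw [pay_u3]
  linear_combination hpq + z₁ true * hq₁ - z₂ true * hp₁

lemma sInf_equilibrium_values_eq_zero :
    sInf {v | ∃ z₁ ∈ stdSimplex ℝ Bool, ∃ z₂ ∈ stdSimplex ℝ Bool,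
      (∀ w ∈ stdSimplex ℝ Bool, pay uL w z₂ ≤ pay uL z₁ z₂) ∧
      (∀ w ∈ stdSimplex ℝ Bool, pay uL z₁ w ≤ pay uL z₁ z₂) ∧
      v = pay (fun a b => u3 (a, b)) z₁ z₂} = 0 := by
  refine (congrArg sInf (Set.eq_singleton_iff_unique_mem.2 ⟨?_, ?_⟩)).trans (csInf_singleton 0)
  · have hT := single_mem_stdSimplex ℝ true
    have hle : ∀ w ∈ stdSimplex ℝ Bool, w true ≤ 1 := fun w hw => by
      linarith [hw.1 false, (Fintype.sum_bool w).symm.trans hw.2]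
    refine ⟨_, hT, _, hT, fun w hw => ?_, fun w hw => ?_, by simp [pay_u3]⟩ <;>
      simpa [pay_uL] using hle w hw
  · rintro v ⟨z₁, hz₁, z₂, hz₂, hbr₁, hbr₂, rfl⟩
    exact pay_u3_eq_zero_of_isNash hz₁ hz₂ hbr₁ hbr₂

/-- Counterexample 2: there exist no-regret strategies for the learners such
that play follows the period-3 cycle `(T,L),(B,R),(B,L),…` almost surely, so the
optimizer's long-run average utility is `-1/3`, strictly below the mixed
pessimistic Stackelberg value, which equals `0`. -/
theorem optimizer_below_mixed_pessimistic_value :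
    NoRegret1 Q1 ∧ NoRegret2 Q2 ∧
      (∀ (Ω : Type) (_ : MeasurableSpace Ω) (μ : Measure Ω),
        IsProbabilityMeasure μ →
        ∀ play : ℕ → Ω → Bool × Bool, (∀ t, Measurable (play t)) →
          Follows1 μ play Q1 → Follows2 μ play Q2 →
          (∀ᵐ ω ∂μ, ∀ t : ℕ, play t ω = cyc t) ∧
          (∀ᵐ ω ∂μ, Tendsto
            (fun M : ℕ => (∑ t ∈ Finset.range M, u3 (play t ω)) / M)
            atTop (nhds (-1/3)))) ∧
      -- the mixed pessimistic Stackelberg value of the game equals 0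
      sInf {v | ∃ z₁ ∈ stdSimplex ℝ Bool, ∃ z₂ ∈ stdSimplex ℝ Bool,
        (∀ w ∈ stdSimplex ℝ Bool, pay uL w z₂ ≤ pay uL z₁ z₂) ∧
        (∀ w ∈ stdSimplex ℝ Bool, pay uL z₁ w ≤ pay uL z₁ z₂) ∧
        v = pay (fun a b => u3 (a, b)) z₁ z₂} = 0 ∧
      (-1/3 : ℝ) < 0 := by
  refine ⟨noRegret1_regretMatching tb1, noRegret2_Q2, fun Ω _ μ _ play hm hF1 hF2 => ?_,
    sInf_equilibrium_values_eq_zero, by norm_num⟩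
  have hcyc := ae_play_eq_cyc hm hF1 hF2
  refine ⟨hcyc, hcyc.mono fun ω hω => ?_⟩
  simpa only [hω] using tendsto_average_u3_cyc
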